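/- arXiv:1711.09453 — 3 statements merged into one kernel-verified Lean document; each statement's English description precedes it below -/
import Mathlib

section
/- The function G(r) = 2λ_l ∫_0^r (1 − e^{−2μ_b√(r²−t²)}) dt is differentiable on (0,∞) and G'(r) = ∫_0^r 4λ_l μ_b r e^{−2μ_b√(r²−u²)} / √(r²−u²) du; equivalently, after the substitution t = r sin φ, G(r) = 2λ_l r ∫_0^{π/2} (1 − e^{−2μ_b r cos φ}) cos φ dφ and G'(r) = 4λ_l μ_b r ∫_0^{π/2} e^{−2μ_b r cos φ} dφ. -/
open MeasureTheory Real Set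


lemma parts (a : ℝ) :
    (∫ φ in (0:ℝ)..(π/2), (Real.cos φ + a * Real.sin φ ^ 2) * Real.exp (-(a * Real.cos φ))) = 1 := by
  have hF : ∀ φ : ℝ, HasDerivAt (fun x => -(Real.sin x * Real.exp (-(a * Real.cos x))))
      (-((Real.cos φ + a * Real.sin φ ^ 2) * Real.exp (-(a * Real.cos φ)))) φ := by
    intro φ
    have h1 : HasDerivAt (fun x : ℝ => -(a * Real.cos x)) (a * Real.sin φ) φ := by
      simpa using (((Real.hasDerivAt_cos φ).const_mul a).fun_neg)
    have h2 : HasDerivAt (fun x : ℝ => Real.exp (-(a * Real.cos x)))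
        (Real.exp (-(a * Real.cos φ)) * (a * Real.sin φ)) φ := h1.exp
    have h3 := ((Real.hasDerivAt_sin φ).fun_mul h2).fun_neg
    refine h3.congr_deriv ?_
    ring
  have := intervalIntegral.integral_eq_sub_of_hasDerivAt
    (f := fun x => -(Real.sin x * Real.exp (-(a * Real.cos x))))
    (a := (0:ℝ)) (b := π/2) (fun x _ => hF x) ?_
  · rw [intervalIntegral.integral_neg] at this
    simp at this
    linarith [this]
  · apply Continuous.intervalIntegrable
    continuity

lemma subst1 (mb s : ℝ) (hs : 0 < s) :
    (∫ t in (0:ℝ)..s, (1 - Real.exp (-2 * mb * Real.sqrt (s ^ 2 - t ^ 2))))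
      = ∫ φ in (0:ℝ)..(π/2), (1 - Real.exp (-2 * mb * s * Real.cos φ)) * (s * Real.cos φ) := by
  have h := intervalIntegral.integral_comp_mul_deriv
    (a := (0:ℝ)) (b := π/2)
    (f := fun φ => s * Real.sin φ) (f' := fun φ => s * Real.cos φ)
    (g := fun t => 1 - Real.exp (-2 * mb * Real.sqrt (s ^ 2 - t ^ 2)))
    (fun x _ => (Real.hasDerivAt_sin x).const_mul s)
    (by fun_prop)
    (by fun_prop)
  simp only [Real.sin_pi_div_two, mul_one, mul_zero, Real.sin_zero] at h
  rw [← h]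
  apply intervalIntegral.integral_congr
  intro φ hφ
  rw [uIcc_of_le (by positivity)] at hφ
  have hcos : 0 ≤ Real.cos φ := Real.cos_nonneg_of_mem_Icc ⟨by linarith [hφ.1, Real.pi_pos], hφ.2⟩
  have : s ^ 2 - (s * Real.sin φ) ^ 2 = (s * Real.cos φ) ^ 2 := by
    have := Real.sin_sq_add_cos_sq φ
    ring_nf
    nlinarith [this]
  simp only [Function.comp]
  rw [this, Real.sqrt_sq (by positivity)]
  ring_nf

lemma integ_sing (c mb r : ℝ) (hr : 0 < r) :
    IntegrableOn (fun u : ℝ => c * Real.exp (-2 * mb * Real.sqrt (r ^ 2 - u ^ 2))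
      / Real.sqrt (r ^ 2 - u ^ 2)) (Icc 0 r) := by
  rw [integrableOn_Icc_iff_integrableOn_Ioo]
  have hmaj : IntegrableOn (fun u : ℝ => (|c| * Real.exp (2 * |mb| * r) / Real.sqrt r) * (r - u) ^ (-(1/2) : ℝ)) (Ioo 0 r) := by
    apply Integrable.const_mul
    have h2 : IntervalIntegrable (fun u : ℝ => (r - u) ^ (-(1/2) : ℝ)) volume 0 r := by
      have h1 : IntervalIntegrable (fun x : ℝ => x ^ (-(1/2) : ℝ)) volume (r - r) (r - 0) :=
        intervalIntegral.intervalIntegrable_rpow' (by norm_num)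
      simpa using (h1.comp_sub_left r).symm
    have h3 := h2.1
    rwa [integrableOn_Ioc_iff_integrableOn_Ioo] at h3
  apply Integrable.mono hmaj
  · apply AEStronglyMeasurable.restrict
    apply Measurable.aestronglyMeasurable
    apply Measurable.div
    · fun_prop
    · fun_prop
  · filter_upwards [ae_restrict_mem measurableSet_Ioo] with u hu
    have h1 : 0 < r - u := by linarith [hu.2]
    have h2 : 0 < r + u := by linarith [hu.1]
    have hs : Real.sqrt (r ^ 2 - u ^ 2) = Real.sqrt (r - u) * Real.sqrt (r + u) := by
      rw [← Real.sqrt_mul h1.le]; ring_nf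
    have hsr : Real.sqrt r ≤ Real.sqrt (r + u) := Real.sqrt_le_sqrt (by linarith [hu.1])
    have hspos : 0 < Real.sqrt (r ^ 2 - u ^ 2) := Real.sqrt_pos.mpr (by nlinarith [hu.1, hu.2])
    rw [Real.norm_eq_abs, Real.norm_eq_abs, abs_div, abs_mul]
    have hexp : |Real.exp (-2 * mb * Real.sqrt (r ^ 2 - u ^ 2))| ≤ Real.exp (2 * |mb| * r) := by
      rw [abs_of_pos (Real.exp_pos _)]
      apply Real.exp_le_exp.mpr
      have hsle : Real.sqrt (r ^ 2 - u ^ 2) ≤ r :=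
        (Real.sqrt_le_sqrt (by nlinarith : r ^ 2 - u ^ 2 ≤ r ^ 2)).trans_eq (Real.sqrt_sq hr.le)
      calc -2 * mb * Real.sqrt (r ^ 2 - u ^ 2) ≤ 2 * |mb| * Real.sqrt (r ^ 2 - u ^ 2) := by
            nlinarith [neg_abs_le mb, Real.sqrt_nonneg (r ^ 2 - u ^ 2), abs_nonneg mb]
        _ ≤ 2 * |mb| * r := by nlinarith [Real.sqrt_nonneg (r ^ 2 - u ^ 2), abs_nonneg mb]
    have hrpow : (r - u) ^ (-(1/2) : ℝ) = (Real.sqrt (r - u))⁻¹ := by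
      rw [Real.rpow_neg h1.le, Real.sqrt_eq_rpow]
    have hrs : 0 < Real.sqrt r := Real.sqrt_pos.mpr hr
    have hru : 0 < Real.sqrt (r - u) := Real.sqrt_pos.mpr h1
    rw [abs_of_pos hspos]
    have habs : abs ((|c| * Real.exp (2 * |mb| * r) / Real.sqrt r) * (r - u) ^ (-(1/2) : ℝ))
        = |c| * Real.exp (2 * |mb| * r) / (Real.sqrt (r - u) * Real.sqrt r) := by
      rw [abs_of_nonneg (by rw [hrpow]; positivity), hrpow, ← div_eq_mul_inv, div_div,
        mul_comm (Real.sqrt r) (Real.sqrt (r - u))]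
    rw [habs]
    gcongr |c| * ?_ / ?_
    all_goals first
      | exact hexp
      | positivity
      | (rw [hs]; nlinarith [hru.le, hsr, hru])

lemma subst2 (c mb r : ℝ) (hmb : 0 < mb) (hr : 0 < r) :
    (∫ u in (0:ℝ)..r, c * Real.exp (-2 * mb * Real.sqrt (r ^ 2 - u ^ 2)) / Real.sqrt (r ^ 2 - u ^ 2))
      = ∫ φ in (0:ℝ)..(π/2), c * Real.exp (-2 * mb * r * Real.cos φ) := by
  have hpi : (0:ℝ) < π / 2 := by positivity
  set g : ℝ → ℝ := fun u => c * Real.exp (-2 * mb * Real.sqrt (r ^ 2 - u ^ 2)) / Real.sqrt (r ^ 2 - u ^ 2) with hg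
  set f : ℝ → ℝ := fun φ => r * Real.sin φ with hf
  have hmin : min (0:ℝ) (π/2) = 0 := min_eq_left hpi.le
  have hmax : max (0:ℝ) (π/2) = π/2 := max_eq_right hpi.le
  have huIcc : Set.uIcc (0:ℝ) (π/2) = Icc 0 (π/2) := uIcc_of_le hpi.le
  -- image facts
  have himg1 : f '' Ioo 0 (π/2) ⊆ Ioo 0 r := by
    rintro _ ⟨φ, hφ, rfl⟩
    simp only [hf]
    have h1 : 0 < Real.sin φ := Real.sin_pos_of_pos_of_lt_pi hφ.1 (by linarith [Real.pi_pos, hφ.2])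
    have h2 : Real.sin φ < 1 := by
      have := Real.strictMonoOn_sin (a := φ) (b := π/2)
        (Set.mem_Icc.mpr ⟨by linarith [hφ.1, Real.pi_pos], hφ.2.le⟩)
        (Set.mem_Icc.mpr ⟨by linarith [Real.pi_pos], le_refl _⟩) hφ.2
      simpa using this
    constructor
    · positivity
    · nlinarith
  have himg2 : f '' Set.uIcc (0:ℝ) (π/2) ⊆ Icc 0 r := by
    rw [huIcc]
    rintro _ ⟨φ, hφ, rfl⟩
    simp only [hf]
    have h1 : 0 ≤ Real.sin φ := Real.sin_nonneg_of_nonneg_of_le_pi hφ.1 (by linarith [Real.pi_pos, hφ.2])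
    have h2 : Real.sin φ ≤ 1 := Real.sin_le_one φ
    exact ⟨by positivity, by nlinarith⟩
  have key := intervalIntegral.integral_comp_mul_deriv''' (a := (0:ℝ)) (b := π/2)
    (f := f) (f' := fun φ => r * Real.cos φ) (g := g)
    (by fun_prop)
    (by
      intro x hx
      exact ((Real.hasDerivAt_sin x).const_mul r).hasDerivWithinAt)
    (by
      rw [hmin, hmax]
      apply ContinuousOn.mono _ himg1
      apply ContinuousOn.div (by fun_prop) (by fun_prop)
      intro u hu
      have : 0 < r ^ 2 - u ^ 2 := by nlinarith [hu.1, hu.2]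
      positivity)
    ((integ_sing c mb r hr).mono_set himg2)
    ?_
  · have hf0 : f 0 = 0 := by simp [hf]
    have hfpi : f (π/2) = r := by simp [hf]
    rw [hf0, hfpi] at key
    rw [← key]
    apply intervalIntegral.integral_congr_ae
    have h0 : ∀ᵐ x : ℝ, x ≠ π/2 := by
      refine (MeasureTheory.ae_iff).mpr ?_
      simp
    filter_upwards [h0] with φ hφne hφ
    rw [uIoc_of_le hpi.le] at hφ
    have hφlt : φ < π/2 := lt_of_le_of_ne hφ.2 hφne
    have hcos : 0 < Real.cos φ := Real.cos_pos_of_mem_Ioo ⟨by linarith [hφ.1, Real.pi_pos], hφlt⟩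
    have hsq : r ^ 2 - (r * Real.sin φ) ^ 2 = (r * Real.cos φ) ^ 2 := by
      have := Real.sin_sq_add_cos_sq φ
      nlinarith
    simp only [Function.comp, hg, hf]
    rw [hsq, Real.sqrt_sq (by positivity)]
    rw [div_mul_cancel₀ _ (by positivity : r * Real.cos φ ≠ 0)]
    ring_nf
  · -- integrability of composition
    rw [huIcc]
    have hcont : IntegrableOn (fun φ => c * Real.exp (-2 * mb * (r * Real.cos φ))) (Icc 0 (π/2)) :=
      (Continuous.integrableOn_Icc (by fun_prop))
    apply Integrable.mono hcont
    · apply AEStronglyMeasurable.restrict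
      apply Measurable.aestronglyMeasurable
      apply Measurable.mul _ (by fun_prop)
      apply Measurable.div <;> fun_prop
    · filter_upwards [ae_restrict_mem measurableSet_Icc] with φ hφ
      have hcos : 0 ≤ Real.cos φ := Real.cos_nonneg_of_mem_Icc
        ⟨by linarith [hφ.1, Real.pi_pos], hφ.2⟩
      have hsq : r ^ 2 - (r * Real.sin φ) ^ 2 = (r * Real.cos φ) ^ 2 := by
        have := Real.sin_sq_add_cos_sq φ
        nlinarith
      simp only [Function.comp, hg, hf]
      rw [hsq, Real.sqrt_sq (by positivity)]
      rcases eq_or_lt_of_le hcos with h | h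
      · rw [← h]
        simp
      · rw [div_mul_cancel₀ _ (by positivity : r * Real.cos φ ≠ 0)]

lemma paramderiv (mb r : ℝ) (hmb : 0 < mb) (hr : 0 < r) :
    HasDerivAt (fun s : ℝ => ∫ φ in (0:ℝ)..(π/2), (1 - Real.exp (-2 * mb * s * Real.cos φ)) * Real.cos φ)
      (∫ φ in (0:ℝ)..(π/2), 2 * mb * Real.cos φ ^ 2 * Real.exp (-2 * mb * r * Real.cos φ)) r := by
  have h := intervalIntegral.hasDerivAt_integral_of_dominated_loc_of_deriv_le
    (F := fun (s : ℝ) (φ : ℝ) => (1 - Real.exp (-2 * mb * s * Real.cos φ)) * Real.cos φ)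
    (F' := fun (s : ℝ) (φ : ℝ) => 2 * mb * Real.cos φ ^ 2 * Real.exp (-2 * mb * s * Real.cos φ))
    (x₀ := r) (a := (0:ℝ)) (b := π/2) (μ := volume)
    (bound := fun _ => 2 * mb * Real.exp (2 * mb * (|r| + 1)))
    (s := Metric.ball r 1) (Metric.ball_mem_nhds r one_pos)
    (Filter.Eventually.of_forall fun s => (Continuous.aestronglyMeasurable (by fun_prop)).restrict)
    (Continuous.intervalIntegrable (by fun_prop) _ _)
    ((Continuous.aestronglyMeasurable (by fun_prop)).restrict)
    ?_ (Continuous.intervalIntegrable (by fun_prop) _ _) ?_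
  · exact h.2
  · filter_upwards with φ hφ s hs
    rw [uIoc_of_le (by positivity : (0:ℝ) ≤ π/2)] at hφ
    have hc0 : 0 ≤ Real.cos φ := Real.cos_nonneg_of_mem_Icc
      ⟨by linarith [hφ.1.le, Real.pi_pos], hφ.2⟩
    have hc1 : Real.cos φ ≤ 1 := Real.cos_le_one φ
    have hsb : |s| ≤ |r| + 1 := by
      have := abs_sub_abs_le_abs_sub s r
      have h2 : |s - r| < 1 := by simpa [Real.dist_eq] using hs
      linarith
    rw [Real.norm_eq_abs, abs_mul, abs_of_nonneg (by positivity : (0:ℝ) ≤ 2 * mb * Real.cos φ ^ 2),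
      abs_of_pos (Real.exp_pos _)]
    have he : Real.exp (-2 * mb * s * Real.cos φ) ≤ Real.exp (2 * mb * (|r| + 1)) := by
      apply Real.exp_le_exp.mpr
      have h1 : -2 * mb * s * Real.cos φ ≤ 2 * mb * |s| * Real.cos φ := by
        nlinarith [mul_nonneg (mul_nonneg (by positivity : (0:ℝ) ≤ 2 * mb) hc0)
          (by linarith [neg_le_abs s] : (0:ℝ) ≤ |s| + s)]
      have h2 : 2 * mb * |s| * Real.cos φ ≤ 2 * mb * (|r| + 1) := by
        nlinarith [mul_nonneg (abs_nonneg s) (sub_nonneg.mpr hc1), hsb, hmb.le, abs_nonneg s]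
      linarith
    have hsq : Real.cos φ ^ 2 ≤ 1 := by nlinarith
    have hmm := mul_le_mul hsq he (Real.exp_pos _).le (by norm_num : (0:ℝ) ≤ 1)
    nlinarith [hmm, hmb.le]
  · filter_upwards with φ hφ s hs
    have h1 : HasDerivAt (fun x : ℝ => -2 * mb * x * Real.cos φ) (-2 * mb * Real.cos φ) s := by
      simpa using ((hasDerivAt_id s).const_mul (-2 * mb)).mul_const (Real.cos φ)
    have h2 := (h1.exp).const_sub 1
    have h3 := h2.mul_const (Real.cos φ)
    refine h3.congr_deriv ?_
    ring

/-- `G(r) = 2λ_l ∫_0^r (1 - e^{-2μ_b√(r²-t²)}) dt` is differentiable on `(0,∞)` with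
`G'(r) = ∫_0^r 4λ_l μ_b r e^{-2μ_b√(r²-u²)}/√(r²-u²) du`; equivalently, with `t = r sin φ`,
`G(r) = 2λ_l r ∫_0^{π/2} (1 - e^{-2μ_b r cos φ}) cos φ dφ` and
`G'(r) = 4λ_l μ_b r ∫_0^{π/2} e^{-2μ_b r cos φ} dφ`. -/
theorem stmt11 (ll mb : ℝ) (hll : 0 < ll) (hmb : 0 < mb) (r : ℝ) (hr : 0 < r) :
    HasDerivAt
      (fun s : ℝ => 2 * ll * ∫ t in (0:ℝ)..s,
        (1 - Real.exp (-2 * mb * Real.sqrt (s ^ 2 - t ^ 2))))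
      (∫ u in (0:ℝ)..r,
        4 * ll * mb * r * Real.exp (-2 * mb * Real.sqrt (r ^ 2 - u ^ 2))
          / Real.sqrt (r ^ 2 - u ^ 2)) r
    ∧ (2 * ll * ∫ t in (0:ℝ)..r, (1 - Real.exp (-2 * mb * Real.sqrt (r ^ 2 - t ^ 2))))
        = 2 * ll * r * ∫ φ in (0:ℝ)..(π / 2),
            (1 - Real.exp (-2 * mb * r * Real.cos φ)) * Real.cos φ
    ∧ (∫ u in (0:ℝ)..r,
          4 * ll * mb * r * Real.exp (-2 * mb * Real.sqrt (r ^ 2 - u ^ 2))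
            / Real.sqrt (r ^ 2 - u ^ 2))
        = 4 * ll * mb * r * ∫ φ in (0:ℝ)..(π / 2), Real.exp (-2 * mb * r * Real.cos φ) := by
  have hpi : (0:ℝ) ≤ π / 2 := by positivity
  -- notation
  set K : ℝ → ℝ := fun s => ∫ φ in (0:ℝ)..(π/2), (1 - Real.exp (-2 * mb * s * Real.cos φ)) * Real.cos φ with hK
  -- conjunct 2 (for arbitrary positive s)
  have hC2 : ∀ s : ℝ, 0 < s →
      (2 * ll * ∫ t in (0:ℝ)..s, (1 - Real.exp (-2 * mb * Real.sqrt (s ^ 2 - t ^ 2))))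
        = 2 * ll * (s * K s) := by
    intro s hs
    rw [subst1 mb s hs]
    have : (∫ φ in (0:ℝ)..(π/2), (1 - Real.exp (-2 * mb * s * Real.cos φ)) * (s * Real.cos φ))
        = s * K s := by
      rw [hK, ← intervalIntegral.integral_const_mul]
      apply intervalIntegral.integral_congr
      intro φ _
      ring
    rw [this]
  -- conjunct 3
  have hC3 : (∫ u in (0:ℝ)..r,
        4 * ll * mb * r * Real.exp (-2 * mb * Real.sqrt (r ^ 2 - u ^ 2))
          / Real.sqrt (r ^ 2 - u ^ 2))
      = 4 * ll * mb * r * ∫ φ in (0:ℝ)..(π / 2), Real.exp (-2 * mb * r * Real.cos φ) := by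
    rw [subst2 (4 * ll * mb * r) mb r hmb hr, intervalIntegral.integral_const_mul]
  refine ⟨?_, ?_, hC3⟩
  · -- the derivative
    set I2 : ℝ := ∫ φ in (0:ℝ)..(π/2), 2 * mb * Real.cos φ ^ 2 * Real.exp (-2 * mb * r * Real.cos φ) with hI2
    set I3 : ℝ := ∫ φ in (0:ℝ)..(π/2), Real.exp (-2 * mb * r * Real.cos φ) with hI3
    have hKd : HasDerivAt K I2 r := paramderiv mb r hmb hr
    have hH : HasDerivAt (fun s : ℝ => 2 * ll * (s * K s))
        (2 * ll * (1 * K r + r * I2)) r :=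
      ((hasDerivAt_id r).mul hKd).const_mul (2 * ll)
    have hGH : HasDerivAt
        (fun s : ℝ => 2 * ll * ∫ t in (0:ℝ)..s,
          (1 - Real.exp (-2 * mb * Real.sqrt (s ^ 2 - t ^ 2))))
        (2 * ll * (1 * K r + r * I2)) r := by
      apply hH.congr_of_eventuallyEq
      filter_upwards [isOpen_Ioi.mem_nhds hr] with s hs
      exact hC2 s hs
    have hval : 2 * ll * (1 * K r + r * I2)
        = 4 * ll * mb * r * I3 := by
      -- the integration-by-parts identity
      have e : ℝ → ℝ := fun φ => Real.exp (-2 * mb * r * Real.cos φ)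
      have hparts : (∫ φ in (0:ℝ)..(π/2),
          (Real.cos φ * Real.exp (-2 * mb * r * Real.cos φ)
            + 2 * mb * r * Real.sin φ ^ 2 * Real.exp (-2 * mb * r * Real.cos φ))) = 1 := by
        rw [← parts (2 * mb * r)]
        apply intervalIntegral.integral_congr
        intro φ _
        simp only [neg_mul]
        ring
      have hJsplit : (∫ φ in (0:ℝ)..(π/2), Real.cos φ * Real.exp (-2 * mb * r * Real.cos φ))
          + (∫ φ in (0:ℝ)..(π/2), 2 * mb * r * Real.sin φ ^ 2 * Real.exp (-2 * mb * r * Real.cos φ)) = 1 := by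
        rw [← intervalIntegral.integral_add
          (Continuous.intervalIntegrable (by fun_prop) _ _)
          (Continuous.intervalIntegrable (by fun_prop) _ _)]
        exact hparts
      have hKr : K r = 1 - ∫ φ in (0:ℝ)..(π/2), Real.cos φ * Real.exp (-2 * mb * r * Real.cos φ) := by
        show (∫ φ in (0:ℝ)..(π/2), (1 - Real.exp (-2 * mb * r * Real.cos φ)) * Real.cos φ) = _
        have : (∫ φ in (0:ℝ)..(π/2), (1 - Real.exp (-2 * mb * r * Real.cos φ)) * Real.cos φ)
            = ∫ φ in (0:ℝ)..(π/2),
              (Real.cos φ - Real.cos φ * Real.exp (-2 * mb * r * Real.cos φ)) := by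
          apply intervalIntegral.integral_congr
          intro φ _
          ring
        rw [this, intervalIntegral.integral_sub
          (Continuous.intervalIntegrable (by fun_prop) _ _)
          (Continuous.intervalIntegrable (by fun_prop) _ _),
          integral_cos]
        simp
      have hJ2 : (∫ φ in (0:ℝ)..(π/2), 2 * mb * r * Real.sin φ ^ 2 * Real.exp (-2 * mb * r * Real.cos φ))
          = 2 * mb * r * I3 - r * I2 := by
        have h1 : (∫ φ in (0:ℝ)..(π/2), 2 * mb * r * Real.sin φ ^ 2 * Real.exp (-2 * mb * r * Real.cos φ))
            = ∫ φ in (0:ℝ)..(π/2),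
              (2 * mb * r * Real.exp (-2 * mb * r * Real.cos φ)
                - r * (2 * mb * Real.cos φ ^ 2 * Real.exp (-2 * mb * r * Real.cos φ))) := by
          apply intervalIntegral.integral_congr
          intro φ _
          simp only [Real.sin_sq]
          ring
        rw [h1, intervalIntegral.integral_sub
          (Continuous.intervalIntegrable (by fun_prop) _ _)
          (Continuous.intervalIntegrable (by fun_prop) _ _),
          intervalIntegral.integral_const_mul, intervalIntegral.integral_const_mul,
          hI3, hI2]
      rw [hKr]
      have : (∫ φ in (0:ℝ)..(π/2), Real.cos φ * Real.exp (-2 * mb * r * Real.cos φ))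
          = 1 - (2 * mb * r * I3 - r * I2) := by
        rw [← hJ2]; linarith [hJsplit]
      rw [this]
      ring
    rw [hC3, ← hval]
    exact hGH
  · exact (hC2 r hr).trans (by rw [hK]; ring)
end

section
/- Define p₁(μ_b) = ∫_0^∞ 2πλ_b r exp(−πλ_b r² − 2λ_l∫_0^r(1 − e^{−2μ_b√(r²−t²)})dt) dr. Then p₁ is strictly decreasing in μ_b on (0,∞), p₁(μ_b) → 1 as μ_b → 0⁺, and p₁(μ_b) → ∫_0^∞ 2πλ_b r e^{−πλ_b r² − 4λ_l r} dr as μ_b → ∞. -/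
open MeasureTheory Real Filter

namespace Stmt17

noncomputable def inn (mb r t : ℝ) : ℝ := 1 - Real.exp (-2 * mb * Real.sqrt (r ^ 2 - t ^ 2))

noncomputable def I (mb r : ℝ) : ℝ := ∫ t in (0:ℝ)..r, inn mb r t

lemma cont_inn (mb : ℝ) : Continuous (Function.uncurry (inn mb)) := by
  unfold inn Function.uncurry; fun_prop

lemma cont_inn_t (mb r : ℝ) : Continuous (inn mb r) := by unfold inn; fun_prop

lemma inn_nonneg {mb : ℝ} (hmb : 0 ≤ mb) (r t : ℝ) : 0 ≤ inn mb r t := by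
  have : -2 * mb * Real.sqrt (r ^ 2 - t ^ 2) ≤ 0 :=
    mul_nonpos_of_nonpos_of_nonneg (by linarith) (Real.sqrt_nonneg _)
  have := Real.exp_le_one_iff.2 this
  unfold inn; linarith

lemma inn_le_one (mb r t : ℝ) : inn mb r t ≤ 1 := by
  simpa [inn] using (Real.exp_pos _).le

lemma cont_I (mb : ℝ) : Continuous (I mb) :=
  intervalIntegral.continuous_parametric_intervalIntegral_of_continuous
    (cont_inn mb) continuous_id

lemma I_nonneg {mb r : ℝ} (hmb : 0 ≤ mb) (hr : 0 ≤ r) : 0 ≤ I mb r :=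
  intervalIntegral.integral_nonneg hr fun t _ => inn_nonneg hmb r t

lemma I_le {mb r : ℝ} (hr : 0 ≤ r) : I mb r ≤ r := by
  have h := intervalIntegral.integral_mono_on (μ := volume) (f := inn mb r) (g := fun _ => (1:ℝ)) hr
    ((cont_inn_t mb r).intervalIntegrable _ _) (intervalIntegrable_const)
    (fun t _ => inn_le_one mb r t)
  simpa [I] using h

lemma I_le' {mb r : ℝ} (hmb : 0 ≤ mb) (hr : 0 ≤ r) :
    I mb r ≤ r * (1 - Real.exp (-2 * mb * r)) := by
  have h := intervalIntegral.integral_mono_on (f := inn mb r)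
    (g := fun _ => (1 - Real.exp (-2 * mb * r))) (μ := volume) hr
    ((cont_inn_t mb r).intervalIntegrable _ _) (intervalIntegrable_const)
    (fun t ht => ?_)
  · unfold I
    simp only [intervalIntegral.integral_const, smul_eq_mul, sub_zero] at h
    linarith
  · have hs : Real.sqrt (r ^ 2 - t ^ 2) ≤ r := by
      have : r ^ 2 - t ^ 2 ≤ r ^ 2 := by nlinarith [sq_nonneg t]
      calc Real.sqrt (r ^ 2 - t ^ 2) ≤ Real.sqrt (r ^ 2) := Real.sqrt_le_sqrt this
        _ = r := by rw [Real.sqrt_sq hr]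
    have h2 : Real.exp (-2 * mb * r) ≤ Real.exp (-2 * mb * Real.sqrt (r ^ 2 - t ^ 2)) :=
      Real.exp_le_exp.2 (by nlinarith)
    unfold inn; linarith

lemma I_lt {a b r : ℝ} (hr : 0 < r) (hab : a < b) : I a r < I b r := by
  unfold I
  apply intervalIntegral.integral_lt_integral_of_continuousOn_of_le_of_exists_lt hr
    (cont_inn_t a r).continuousOn (cont_inn_t b r).continuousOn
  · intro t _
    have hs : 0 ≤ Real.sqrt (r ^ 2 - t ^ 2) := Real.sqrt_nonneg _
    have h2 : Real.exp (-2 * b * Real.sqrt (r ^ 2 - t ^ 2))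
        ≤ Real.exp (-2 * a * Real.sqrt (r ^ 2 - t ^ 2)) :=
      Real.exp_le_exp.2 (by nlinarith)
    unfold inn; linarith
  · refine ⟨0, ⟨le_rfl, hr.le⟩, ?_⟩
    have hs : Real.sqrt (r ^ 2 - 0 ^ 2) = r := by simp [Real.sqrt_sq hr.le]
    have : -2 * b * r < -2 * a * r := by nlinarith
    have h2 := Real.exp_lt_exp.2 this
    simp only [inn, hs]
    linarith


noncomputable def f (lb ll mb r : ℝ) : ℝ :=
  2 * π * lb * r * Real.exp (-(π * lb) * r ^ 2 - 2 * ll * I mb r)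

noncomputable def g (lb r : ℝ) : ℝ := 2 * π * lb * r * Real.exp (-(π * lb) * r ^ 2)

lemma cont_f (lb ll mb : ℝ) : Continuous (f lb ll mb) := by
  unfold f
  exact (continuous_const.mul continuous_id).mul
    (((continuous_const.mul (continuous_pow 2)).sub
      (continuous_const.mul (cont_I mb))).rexp)

lemma f_nonneg {lb : ℝ} (hlb : 0 ≤ lb) (ll mb : ℝ) {r : ℝ} (hr : 0 ≤ r) :
    0 ≤ f lb ll mb r :=
  mul_nonneg (by positivity) (Real.exp_pos _).le

lemma f_le {lb ll mb r : ℝ} (hlb : 0 ≤ lb) (hll : 0 ≤ ll) (hmb : 0 ≤ mb) (hr : 0 ≤ r) :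
    f lb ll mb r ≤ g lb r := by
  unfold f g
  have hI := I_nonneg hmb hr
  have : Real.exp (-(π * lb) * r ^ 2 - 2 * ll * I mb r) ≤ Real.exp (-(π * lb) * r ^ 2) :=
    Real.exp_le_exp.2 (by nlinarith)
  have h0 : 0 ≤ 2 * π * lb * r := by positivity
  nlinarith [Real.exp_pos (-(π * lb) * r ^ 2)]

lemma Ig {lb : ℝ} (hlb : 0 < lb) : IntegrableOn (g lb) (Set.Ioi 0) volume := by
  have hb : 0 < π * lb := by positivity
  have := ((integrable_mul_exp_neg_mul_sq hb).const_mul (2 * π * lb)).integrableOn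
    (s := Set.Ioi 0)
  refine this.congr_fun (fun r _ => by unfold g; ring) measurableSet_Ioi

lemma hg1 {lb : ℝ} (hlb : 0 < lb) : ∫ r in Set.Ioi (0:ℝ), g lb r = 1 := by
  have hb : 0 < π * lb := by positivity
  have hderiv : ∀ x ∈ Set.Ioi (0:ℝ),
      HasDerivAt (fun r : ℝ => -Real.exp (-(π * lb) * r ^ 2)) (g lb x) x := by
    intro x _
    have h1 : HasDerivAt (fun r : ℝ => -(π * lb) * r ^ 2) (-(π * lb) * (2 * x)) x := by
      simpa using ((hasDerivAt_pow 2 x).const_mul (-(π * lb)))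
    have h2 := (h1.exp).neg
    have e : g lb x = -(Real.exp (-(π * lb) * x ^ 2) * (-(π * lb) * (2 * x))) := by
      unfold g; ring
    rw [e]; exact h2
  have htend : Tendsto (fun r : ℝ => -Real.exp (-(π * lb) * r ^ 2)) atTop (nhds 0) := by
    rw [show (0:ℝ) = -0 by ring]
    refine Tendsto.neg ?_
    refine Real.tendsto_exp_atBot.comp ?_
    have : Tendsto (fun r : ℝ => r ^ 2) atTop atTop := tendsto_pow_atTop (by norm_num)
    exact this.const_mul_atTop_of_neg (by linarith)
  have := integral_Ioi_of_hasDerivAt_of_tendsto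
    (a := 0) (f := fun r : ℝ => -Real.exp (-(π * lb) * r ^ 2)) (f' := g lb)
    (Continuous.continuousWithinAt (by fun_prop)) hderiv ((Ig hlb)) htend
  simpa using this

lemma If {lb ll mb : ℝ} (hlb : 0 < lb) (hll : 0 < ll) (hmb : 0 ≤ mb) :
    IntegrableOn (f lb ll mb) (Set.Ioi 0) volume := by
  refine Integrable.mono' (Ig hlb) (cont_f lb ll mb).aestronglyMeasurable.restrict ?_
  filter_upwards [ae_restrict_mem measurableSet_Ioi] with r hr
  rw [Real.norm_eq_abs, abs_of_nonneg (f_nonneg hlb.le ll mb (le_of_lt hr))]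
  exact f_le hlb.le hll.le hmb (le_of_lt hr)


lemma anti {lb ll : ℝ} (hlb : 0 < lb) (hll : 0 < ll) {a b : ℝ} (ha : 0 < a) (hab : a < b) :
    ∫ r in Set.Ioi (0:ℝ), f lb ll b r < ∫ r in Set.Ioi (0:ℝ), f lb ll a r := by
  have hb0 : 0 < b := lt_trans ha hab
  have hIa := If hlb hll ha.le
  have hIb := If hlb hll hb0.le
  have key : ∀ r ∈ Set.Ioi (0:ℝ), f lb ll b r < f lb ll a r := by
    intro r hr
    have hr' : (0:ℝ) < r := hr
    have hI := I_lt hr' hab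
    have hexp : Real.exp (-(π * lb) * r ^ 2 - 2 * ll * I b r)
        < Real.exp (-(π * lb) * r ^ 2 - 2 * ll * I a r) :=
      Real.exp_lt_exp.2 (by nlinarith)
    have h0 : 0 < 2 * π * lb * r := by positivity
    unfold f
    nlinarith
  have hpos : 0 < ∫ r in Set.Ioi (0:ℝ), (f lb ll a r - f lb ll b r) := by
    refine (setIntegral_pos_iff_support_of_nonneg_ae ?_ (hIa.sub hIb)).2 ?_
    · filter_upwards [ae_restrict_mem measurableSet_Ioi] with r hr
      have := key r hr
      simp only [Pi.zero_apply, Pi.sub_apply]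
      linarith
    · have hsub : Set.Ioo (0:ℝ) 1 ⊆ Function.support (f lb ll a - f lb ll b) ∩ Set.Ioi 0 := by
        intro x hx
        refine ⟨?_, hx.1⟩
        have := key x hx.1
        simp only [Function.mem_support, Pi.sub_apply]
        intro h
        rw [sub_eq_zero] at h
        linarith [h ▸ this]
      refine lt_of_lt_of_le ?_ (measure_mono hsub)
      rw [Real.volume_Ioo]; norm_num
  rw [integral_sub hIa hIb] at hpos
  linarith

lemma tend0 {lb ll : ℝ} (hlb : 0 < lb) (hll : 0 < ll) :
    Tendsto (fun mb => ∫ r in Set.Ioi (0:ℝ), f lb ll mb r)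
      (nhdsWithin 0 (Set.Ioi 0)) (nhds 1) := by
  rw [← hg1 hlb]
  refine tendsto_integral_filter_of_dominated_convergence (g lb) ?_ ?_ (Ig hlb) ?_
  · exact Eventually.of_forall fun mb => (cont_f lb ll mb).aestronglyMeasurable.restrict
  · filter_upwards [eventually_mem_nhdsWithin] with mb hmb
    filter_upwards [ae_restrict_mem measurableSet_Ioi] with r hr
    rw [Real.norm_eq_abs, abs_of_nonneg (f_nonneg hlb.le ll mb (le_of_lt hr))]
    exact f_le hlb.le hll.le (le_of_lt (show (0:ℝ) < mb from hmb)) (le_of_lt hr)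
  · refine (ae_restrict_mem measurableSet_Ioi).mono fun r hr => ?_
    have hr' : (0:ℝ) < r := hr
    have hIlim : Tendsto (fun mb => I mb r) (nhdsWithin 0 (Set.Ioi 0)) (nhds 0) := by
      have hcu : Continuous fun mb : ℝ => r * (1 - Real.exp (-2 * mb * r)) := by fun_prop
      refine tendsto_of_tendsto_of_tendsto_of_le_of_le' tendsto_const_nhds
        ((hcu.tendsto' 0 0 (by norm_num)).mono_left nhdsWithin_le_nhds) ?_ ?_
      · filter_upwards [eventually_mem_nhdsWithin] with mb hmb
        exact I_nonneg (le_of_lt (show (0:ℝ) < mb from hmb)) hr'.le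
      · filter_upwards [eventually_mem_nhdsWithin] with mb hmb
        exact I_le' (le_of_lt (show (0:ℝ) < mb from hmb)) hr'.le
    have hc : Continuous fun x : ℝ =>
        2 * π * lb * r * Real.exp (-(π * lb) * r ^ 2 - 2 * ll * x) := by fun_prop
    exact (hc.tendsto' 0 (g lb r) (by unfold g; norm_num)).comp hIlim

lemma Ilim {r : ℝ} (hr : 0 < r) : Tendsto (fun mb => I mb r) atTop (nhds r) := by
  have hJ : Tendsto
      (fun mb => ∫ t in Set.Ioc (0:ℝ) r, Real.exp (-2 * mb * Real.sqrt (r ^ 2 - t ^ 2)))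
      atTop (nhds 0) := by
    have key := tendsto_integral_filter_of_dominated_convergence
      (μ := volume.restrict (Set.Ioc (0:ℝ) r)) (l := atTop)
      (F := fun mb t => Real.exp (-2 * mb * Real.sqrt (r ^ 2 - t ^ 2)))
      (f := fun _ => (0:ℝ)) (fun _ => (1:ℝ)) ?_ ?_ ?_ ?_
    · simpa using key
    · exact Eventually.of_forall fun mb =>
        (Continuous.aestronglyMeasurable (by fun_prop)).restrict
    · filter_upwards [eventually_ge_atTop (0:ℝ)] with mb hmb
      filter_upwards [ae_restrict_mem measurableSet_Ioc] with t _
      rw [Real.norm_eq_abs, abs_of_nonneg (Real.exp_pos _).le]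
      exact Real.exp_le_one_iff.2
        (mul_nonpos_of_nonpos_of_nonneg (by linarith) (Real.sqrt_nonneg _))
    · exact integrableOn_const measure_Ioc_lt_top.ne
    · have hne : ∀ᵐ t : ℝ, t ≠ r := by
        refine ae_iff.2 ?_
        have : {a : ℝ | ¬a ≠ r} = {r} := by ext x; simp
        rw [this, Real.volume_singleton]
      filter_upwards [ae_restrict_mem measurableSet_Ioc, ae_restrict_of_ae hne] with t ht htr
      have ht2 : t < r := lt_of_le_of_ne ht.2 htr
      have hs : 0 < Real.sqrt (r ^ 2 - t ^ 2) := Real.sqrt_pos.2 (by nlinarith [ht.1])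
      have hmul : Tendsto (fun mb : ℝ => -2 * mb * Real.sqrt (r ^ 2 - t ^ 2)) atTop atBot := by
        have := (tendsto_id (α := ℝ)).const_mul_atTop_of_neg
          (show -2 * Real.sqrt (r ^ 2 - t ^ 2) < 0 by linarith)
        exact this.congr fun mb => by simp only [id_eq]; ring
      exact Real.tendsto_exp_atBot.comp hmul
  have hsplit : ∀ mb : ℝ, I mb r
      = r - ∫ t in Set.Ioc (0:ℝ) r, Real.exp (-2 * mb * Real.sqrt (r ^ 2 - t ^ 2)) := by
    intro mb
    unfold I inn
    rw [intervalIntegral.integral_sub intervalIntegrable_const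
      ((Continuous.intervalIntegrable (by fun_prop)) _ _)]
    simp [intervalIntegral.integral_of_le hr.le, ENNReal.toReal_ofReal hr.le, hr.le]
  have := (tendsto_const_nhds (x := r) (f := atTop (α := ℝ))).sub hJ
  rw [sub_zero] at this
  exact Tendsto.congr (fun mb => (hsplit mb).symm) this

lemma tendInf {lb ll : ℝ} (hlb : 0 < lb) (hll : 0 < ll) :
    Tendsto (fun mb => ∫ r in Set.Ioi (0:ℝ), f lb ll mb r) atTop
      (nhds (∫ r in Set.Ioi (0:ℝ), 2 * π * lb * r *
        Real.exp (-(π * lb) * r ^ 2 - 2 * ll * r))) := by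
  refine tendsto_integral_filter_of_dominated_convergence (g lb) ?_ ?_ (Ig hlb) ?_
  · exact Eventually.of_forall fun mb => (cont_f lb ll mb).aestronglyMeasurable.restrict
  · filter_upwards [eventually_ge_atTop (0:ℝ)] with mb hmb
    filter_upwards [ae_restrict_mem measurableSet_Ioi] with r hr
    rw [Real.norm_eq_abs, abs_of_nonneg (f_nonneg hlb.le ll mb (le_of_lt hr))]
    exact f_le hlb.le hll.le hmb (le_of_lt hr)
  · refine (ae_restrict_mem measurableSet_Ioi).mono fun r hr => ?_
    have hr' : (0:ℝ) < r := hr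
    have hc : Continuous fun x : ℝ =>
        2 * π * lb * r * Real.exp (-(π * lb) * r ^ 2 - 2 * ll * x) := by fun_prop
    exact (hc.tendsto r).comp (Ilim hr')

end Stmt17

/-- `p₁(μ_b) = ∫_0^∞ 2πλ_b r exp(-πλ_b r² - 2λ_l ∫_0^r (1-e^{-2μ_b√(r²-t²)}) dt) dr` is strictly
decreasing in `μ_b` on `(0,∞)`, tends to `1` as `μ_b → 0⁺`, and tends to
`∫_0^∞ 2πλ_b r e^{-πλ_b r² - 2λ_l r} dr` as `μ_b → ∞` (since `∫_0^r (1-e^{-2μ_b√(r²-t²)}) dt → r`). -/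
theorem stmt17 (lb ll : ℝ) (hlb : 0 < lb) (hll : 0 < ll)
    (p1 : ℝ → ℝ)
    (hp1 : ∀ mb : ℝ, p1 mb
      = ∫ r in Set.Ioi (0:ℝ), 2 * π * lb * r *
          Real.exp (-(π * lb) * r ^ 2
            - 2 * ll * ∫ t in (0:ℝ)..r,
                (1 - Real.exp (-2 * mb * Real.sqrt (r ^ 2 - t ^ 2))))) :
    StrictAntiOn p1 (Set.Ioi 0)
    ∧ Tendsto p1 (nhdsWithin 0 (Set.Ioi 0)) (nhds 1)
    ∧ Tendsto p1 atTop
        (nhds (∫ r in Set.Ioi (0:ℝ), 2 * π * lb * r *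
          Real.exp (-(π * lb) * r ^ 2 - 2 * ll * r))) := by
  have hp1' : ∀ mb : ℝ, p1 mb = ∫ r in Set.Ioi (0:ℝ), Stmt17.f lb ll mb r := hp1
  refine ⟨?_, ?_, ?_⟩
  · intro a ha b _hb hab
    rw [hp1' a, hp1' b]
    exact Stmt17.anti hlb hll ha hab
  · exact ((Stmt17.tend0 hlb hll).congr fun mb => (hp1' mb).symm)
  · exact ((Stmt17.tendInf hlb hll).congr fun mb => (hp1' mb).symm)
end

section
/- Let f : (0,∞) → [0,1] be measurable and let R_p have density 2πλ_b r e^{−πλ_b r²}. If the coverage probability is p(T) = E[f_T(R_p)] where for each r, f_T(r) = exp(−2πλ_b∫_r^∞ T r^α u^{1−α}/(1+T r^α u^{−α}) du) (interference from planar base stations only, μ_b = λ_l = 0 case), then p(T) = 1/(1 + T^{2/α} ∫_{T^{−2/α}}^∞ 1/(1+u^{α/2}) du) — the classical Poisson cellular coverage formula. -/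
open MeasureTheory Real Set

theorem inner_int (T α r : ℝ) (hT : 0 < T) (hα : 2 < α) (hr : 0 < r) :
    ∫ u in Set.Ici r, T * r ^ α * u ^ (1 - α) / (1 + T * r ^ α * u ^ (-α))
      = r ^ 2 * T ^ ((2:ℝ)/α) / 2 *
        ∫ u in Set.Ici (T ^ (-((2:ℝ) / α))), 1 / (1 + u ^ (α / 2)) := by
  have hα0 : (0:ℝ) < α := by linarith
  set c : ℝ := T ^ (-((2:ℝ)/α)) with hc
  have hc0 : 0 < c := Real.rpow_pos_of_pos hT _
  set a : ℝ := r * T ^ ((1:ℝ)/α) with ha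
  have ha0 : 0 < a := mul_pos hr (Real.rpow_pos_of_pos hT _)
  have hsc : Real.sqrt c = T ^ (-(1:ℝ)/α) := by
    rw [hc, Real.sqrt_eq_rpow, ← Real.rpow_mul hT.le]
    congr 1
    field_simp
  have hfc : a * Real.sqrt c = r := by
    rw [hsc, ha, mul_assoc, ← Real.rpow_add hT]
    have : (1:ℝ)/α + -1/α = 0 := by ring
    rw [this, Real.rpow_zero, mul_one]
  set f : ℝ → ℝ := fun v => a * Real.sqrt v with hf
  have himg : Ioi r = f '' Ioi c := by
    ext y
    simp only [mem_image, mem_Ioi]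
    constructor
    · intro hy
      refine ⟨(y / a) ^ 2, ?_, ?_⟩
      · have h1 : Real.sqrt c < y / a := by
          rw [lt_div_iff₀ ha0, mul_comm, hfc]; exact hy
        have h2 : (Real.sqrt c)^2 < (y/a)^2 :=
          pow_lt_pow_left₀ h1 (Real.sqrt_nonneg _) (by norm_num)
        rwa [Real.sq_sqrt hc0.le] at h2
      · have hy0 : 0 < y := lt_trans hr hy
        show a * Real.sqrt ((y/a)^2) = y
        rw [Real.sqrt_sq (by positivity : (0:ℝ) ≤ y / a)]
        field_simp
    · rintro ⟨v, hv, rfl⟩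
      rw [← hfc]
      show a * Real.sqrt c < a * Real.sqrt v
      exact mul_lt_mul_of_pos_left (Real.sqrt_lt_sqrt hc0.le hv) ha0
  have hderiv : ∀ v ∈ Ioi c, HasDerivWithinAt f (a * (1 / (2 * Real.sqrt v))) (Ioi c) v := by
    intro v hv
    exact ((Real.hasDerivAt_sqrt (ne_of_gt (lt_trans hc0 hv))).const_mul a).hasDerivWithinAt
  have hinj : InjOn f (Ioi c) := by
    intro x hx y hy hxy
    have h := mul_left_cancel₀ (ne_of_gt ha0) hxy
    exact (Real.sqrt_inj (lt_trans hc0 hx).le (lt_trans hc0 hy).le).1 h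
  rw [integral_Ici_eq_integral_Ioi, integral_Ici_eq_integral_Ioi, himg,
    integral_image_eq_integral_abs_deriv_smul measurableSet_Ioi hderiv hinj,
    ← integral_const_mul]
  apply setIntegral_congr_fun measurableSet_Ioi
  intro v hv
  have hv0 : 0 < v := lt_trans hc0 hv
  set s := Real.sqrt v with hsv
  have hs0 : 0 < s := Real.sqrt_pos.2 hv0
  have hs2 : s ^ 2 = v := Real.sq_sqrt hv0.le
  have hvrp : v ^ (α/2) = s ^ α := by
    rw [← hs2, ← Real.rpow_natCast s 2, ← Real.rpow_mul hs0.le]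
    norm_num
    congr 1
    ring
  have haT : T * r ^ α * a ^ (-α) = 1 := by
    rw [ha, Real.mul_rpow hr.le (Real.rpow_pos_of_pos hT _).le, ← Real.rpow_mul hT.le]
    have h1 : (1:ℝ)/α * (-α) = -1 := by field_simp
    rw [h1, Real.rpow_neg_one, Real.rpow_neg hr.le]
    have : r ^ α ≠ 0 := ne_of_gt (Real.rpow_pos_of_pos hr _)
    field_simp
  have ha2 : a ^ 2 = r ^ 2 * T ^ ((2:ℝ)/α) := by
    rw [ha, mul_pow, ← Real.rpow_natCast (T ^ ((1:ℝ)/α)) 2, ← Real.rpow_mul hT.le]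
    norm_num
    left
    congr 1
    ring
  have hw0 : 0 < a * s := mul_pos ha0 hs0
  set p := s ^ α with hp
  have hp0 : 0 < p := Real.rpow_pos_of_pos hs0 _
  have e2 : T * r ^ α * (a * s) ^ (-α) = p⁻¹ := by
    rw [Real.mul_rpow ha0.le hs0.le,
      show T * r ^ α * (a ^ (-α) * s ^ (-α)) = (T * r ^ α * a ^ (-α)) * s ^ (-α) by ring,
      haT, one_mul, hp, Real.rpow_neg hs0.le]
  have e4 : T * r ^ α * (a * s) ^ (1 - α) = a * s * p⁻¹ := by
    rw [show (1 - α : ℝ) = 1 + -α by ring, Real.rpow_add hw0, Real.rpow_one,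
      show T * r ^ α * (a * s * (a * s) ^ (-α)) = a * s * (T * r ^ α * (a * s) ^ (-α)) by ring,
      e2]
  show |a * (1 / (2 * s))| * (T * r ^ α * (a * s) ^ (1 - α) / (1 + T * r ^ α * (a * s) ^ (-α)))
      = r ^ 2 * T ^ ((2:ℝ)/α) / 2 * (1 / (1 + v ^ (α/2)))
  rw [e2, e4, hvrp, ← ha2, abs_of_pos (by positivity)]
  have h1p : (0:ℝ) < 1 + p := by linarith
  have h1pi : (0:ℝ) < 1 + p⁻¹ := by positivity
  field_simp
  ring

/-- Classical Poisson cellular coverage (Andrews–Baccelli–Ganti): with nearest-BS distance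
density `2πλ_b r e^{-πλ_b r²}` and conditional coverage
`f_T(r) = exp(-2πλ_b ∫_r^∞ T r^α u^{1-α}/(1+T r^α u^{-α}) du)`, the coverage probability
`p(T) = E[f_T(R_p)]` equals `1/(1 + T^{2/α} ∫_{T^{-2/α}}^∞ du/(1+u^{α/2}))`. -/
theorem stmt19 (lb T α : ℝ) (hlb : 0 < lb) (hT : 0 < T) (hα : 2 < α) :
    ∫ r in Set.Ioi (0:ℝ),
        2 * π * lb * r * Real.exp (-(π * lb) * r ^ 2) *
          Real.exp (-(2 * π * lb) * ∫ u in Set.Ici r,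
            T * r ^ α * u ^ (1 - α) / (1 + T * r ^ α * u ^ (-α)))
      = 1 / (1 + T ^ ((2:ℝ) / α) * ∫ u in Set.Ici (T ^ (-((2:ℝ) / α))),
          1 / (1 + u ^ (α / 2))) := by
  have hc0 : (0:ℝ) < T ^ (-((2:ℝ)/α)) := Real.rpow_pos_of_pos hT _
  set ρ : ℝ := ∫ u in Set.Ici (T ^ (-((2:ℝ) / α))), 1 / (1 + u ^ (α / 2)) with hρ
  have hρ0 : 0 ≤ ρ := by
    apply setIntegral_nonneg measurableSet_Ici
    intro u hu
    have hu0 : 0 < u := lt_of_lt_of_le hc0 hu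
    positivity
  set K : ℝ := T ^ ((2:ℝ)/α) * ρ with hK
  have hK0 : 0 ≤ K := mul_nonneg (Real.rpow_pos_of_pos hT _).le hρ0
  set b : ℝ := π * lb * (1 + K) with hb
  have hb0 : 0 < b := by
    have := Real.pi_pos
    have : (0:ℝ) < 1 + K := by linarith
    positivity
  have step1 : ∫ r in Set.Ioi (0:ℝ),
        2 * π * lb * r * Real.exp (-(π * lb) * r ^ 2) *
          Real.exp (-(2 * π * lb) * ∫ u in Set.Ici r,
            T * r ^ α * u ^ (1 - α) / (1 + T * r ^ α * u ^ (-α)))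
      = ∫ r in Set.Ioi (0:ℝ), 2 * π * lb * r * Real.exp (-b * r ^ 2) := by
    apply setIntegral_congr_fun measurableSet_Ioi
    intro r hr
    have hr0 : (0:ℝ) < r := hr
    show 2 * π * lb * r * Real.exp (-(π * lb) * r ^ 2) *
          Real.exp (-(2 * π * lb) * ∫ u in Set.Ici r,
            T * r ^ α * u ^ (1 - α) / (1 + T * r ^ α * u ^ (-α)))
        = 2 * π * lb * r * Real.exp (-b * r ^ 2)
    rw [inner_int T α r hT hα hr0, ← hρ, mul_assoc, ← Real.exp_add]
    congr 1
    rw [hb, hK]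
    ring
  rw [step1]
  have hg : ∀ x ∈ Set.Ioi (0:ℝ),
      HasDerivAt (fun x : ℝ => -(π * lb / b) * Real.exp (-b * x ^ 2))
        (2 * π * lb * x * Real.exp (-b * x ^ 2)) x := by
    intro x _
    have h1 : HasDerivAt (fun x : ℝ => -b * x ^ 2) (-b * (2 * x)) x := by
      simpa using (hasDerivAt_pow 2 x).const_mul (-b)
    have h2 := (h1.exp).const_mul (-(π * lb / b))
    refine h2.congr_deriv ?_
    field_simp
  have htend : Filter.Tendsto (fun x : ℝ => -(π * lb / b) * Real.exp (-b * x ^ 2))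
      Filter.atTop (nhds 0) := by
    have h1 : Filter.Tendsto (fun x : ℝ => -b * x ^ 2) Filter.atTop Filter.atBot :=
      (Filter.tendsto_pow_atTop (two_ne_zero)).const_mul_atTop_of_neg (neg_neg_iff_pos.2 hb0)
    have h2 := Real.tendsto_exp_atBot.comp h1
    simpa using h2.const_mul (-(π * lb / b))
  have hnn : ∀ x ∈ Set.Ioi (0:ℝ), 0 ≤ 2 * π * lb * x * Real.exp (-b * x ^ 2) := by
    intro x hx
    have hx0 : (0:ℝ) < x := hx
    have := Real.pi_pos
    positivity
  have hcont : ContinuousWithinAt (fun x : ℝ => -(π * lb / b) * Real.exp (-b * x ^ 2))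
      (Set.Ici 0) 0 :=
    (continuous_const.mul (Real.continuous_exp.comp
      (continuous_const.mul (continuous_pow 2)))).continuousWithinAt
  rw [integral_Ioi_of_hasDerivAt_of_nonneg hcont hg hnn htend]
  have h1K : (0:ℝ) < 1 + K := by linarith
  have hπ : (0:ℝ) < π * lb := by have := Real.pi_pos; positivity
  norm_num
  rw [hb]
  field_simp
end
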